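/- arXiv:2012.10514 — 8 statements merged into one kernel-verified Lean document; each statement's English description precedes it below -/
import Mathlib

section
/- Let M be a commutative monoid with a translation invariant extended pseudometric d, and let K(M) be its Grothendieck group (equivalence classes of pairs (a,b), written a−b, where (a,b)∼(c,e) iff a+e+k = b+c+k for some k ∈ M). Then the function ρ(a−b, c−e) := d(a+e, c+b) is a well-defined translation invariant extended pseudometric on K(M). -/
open scoped ENNReal

/-- The Grothendieck relation on pairs: `(a,b) ∼ (c,e)` iff `a+e+k = b+c+k` for some `k`. -/
def GRel (M : Type*) [AddCommMonoid M] : M × M → M × M → Prop :=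
  fun p q => ∃ k : M, p.1 + q.2 + k = p.2 + q.1 + k

/-- The Grothendieck group of `M`, as a quotient of `M × M`. -/
def Groth (M : Type*) [AddCommMonoid M] := Quot (GRel M)

/-- The formal difference `a - b` in the Grothendieck group. -/
def Groth.mk {M : Type*} [AddCommMonoid M] (a b : M) : Groth M := Quot.mk _ (a, b)

/-- Addition on the Grothendieck group. -/
def Groth.add {M : Type*} [AddCommMonoid M] : Groth M → Groth M → Groth M :=
  Quot.map₂ (fun p q => (p.1 + q.1, p.2 + q.2))
    (fun p q q' ⟨k, hk⟩ => ⟨k, by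
      calc p.1 + q.1 + (p.2 + q'.2) + k = p.1 + p.2 + (q.1 + q'.2 + k) := by abel
        _ = p.1 + p.2 + (q.2 + q'.1 + k) := by rw [hk]
        _ = p.2 + q.2 + (p.1 + q'.1) + k := by abel⟩)
    (fun p p' q ⟨k, hk⟩ => ⟨k, by
      calc p.1 + q.1 + (p'.2 + q.2) + k = q.1 + q.2 + (p.1 + p'.2 + k) := by abel
        _ = q.1 + q.2 + (p.2 + p'.1 + k) := by rw [hk]
        _ = p.2 + q.2 + (p'.1 + q.1) + k := by abel⟩)

/-- `ρ(a−b, c−e) := d(a+e, c+b)` is a well-defined translation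
invariant extended pseudometric on the Grothendieck group `K(M)`. -/
theorem groth_metric_well_defined {M : Type*} [AddCommMonoid M]
    (d : M → M → ℝ≥0∞)
    (hrefl : ∀ x, d x x = 0)
    (hsymm : ∀ x y, d x y = d y x)
    (htri : ∀ x y z, d x y ≤ d x z + d z y)
    (htrans : ∀ m n p : M, d (m + p) (n + p) = d m n) :
    ∃ ρ : Groth M → Groth M → ℝ≥0∞,
      (∀ a b c e : M, ρ (Groth.mk a b) (Groth.mk c e) = d (a + e) (c + b)) ∧
      (∀ x, ρ x x = 0) ∧
      (∀ x y, ρ x y = ρ y x) ∧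
      (∀ x y z, ρ x y ≤ ρ x z + ρ z y) ∧
      (∀ x y z, ρ (x.add z) (y.add z) = ρ x y) := by
  have htrans' : ∀ m n p q : M, m + p = q → d m n = d (p) (n) → True := fun _ _ _ _ _ _ => trivial
  -- helper: d is invariant under any common rearranged addend
  have key : ∀ a b c : M, d (a + c) (b + c) = d a b := htrans
  set f : M × M → M × M → ℝ≥0∞ := fun p q => d (p.1 + q.2) (q.1 + p.2) with hf
  have hright : ∀ p q q' : M × M, GRel M q q' → f p q = f p q' := by
    rintro ⟨a, b⟩ ⟨c, e⟩ ⟨c', e'⟩ ⟨k, hk⟩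
    simp only [hf]
    dsimp at hk ⊢
    -- hk : c + e' + k = e + c' + k
    calc d (a + e) (c + b)
        = d (a + e + (e' + k)) (c + b + (e' + k)) := (key _ _ _).symm
      _ = d (a + e' + (e + k)) (c' + b + (e + k)) := by
          congr 1
          · abel
          · calc c + b + (e' + k) = b + (c + e' + k) := by abel
              _ = b + (e + c' + k) := by rw [hk]
              _ = c' + b + (e + k) := by abel
      _ = d (a + e') (c' + b) := key _ _ _
  have hleft : ∀ p p' q : M × M, GRel M p p' → f p q = f p' q := by
    rintro ⟨a, b⟩ ⟨a', b'⟩ ⟨c, e⟩ ⟨k, hk⟩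
    simp only [hf]
    dsimp at hk ⊢
    -- hk : a + b' + k = b + a' + k
    calc d (a + e) (c + b)
        = d (a + e + (b' + k)) (c + b + (b' + k)) := (key _ _ _).symm
      _ = d (a' + e + (b + k)) (c + b' + (b + k)) := by
          congr 1
          · calc a + e + (b' + k) = e + (a + b' + k) := by abel
              _ = e + (b + a' + k) := by rw [hk]
              _ = a' + e + (b + k) := by abel
          · abel
      _ = d (a' + e) (c + b') := key _ _ _
  refine ⟨Quot.lift₂ f (fun p q q' h => hright p q q' h) (fun p p' q h => hleft p p' q h),
    fun a b c e => rfl, ?_, ?_, ?_, ?_⟩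
  · rintro ⟨⟨a, b⟩⟩
    simpa using hrefl (a + b)
  · rintro ⟨⟨a, b⟩⟩ ⟨⟨c, e⟩⟩
    simpa using hsymm (a + e) (c + b)
  · rintro ⟨⟨a, b⟩⟩ ⟨⟨c, e⟩⟩ ⟨⟨u, v⟩⟩
    show d (a + e) (c + b) ≤ d (a + v) (u + b) + d (u + e) (c + v)
    calc d (a + e) (c + b)
        = d (a + e + (u + v)) (c + b + (u + v)) := (key _ _ _).symm
      _ ≤ d (a + e + (u + v)) (b + e + (u + u)) + d (b + e + (u + u)) (c + b + (u + v)) :=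
          htri _ _ _
      _ = d (a + v) (u + b) + d (u + e) (c + v) := by
          congr 1
          · calc d (a + e + (u + v)) (b + e + (u + u))
                = d (a + v + (e + u)) (u + b + (e + u)) := by congr 1 <;> abel
              _ = d (a + v) (u + b) := key _ _ _
          · calc d (b + e + (u + u)) (c + b + (u + v))
                = d (u + e + (b + u)) (c + v + (b + u)) := by congr 1 <;> abel
              _ = d (u + e) (c + v) := key _ _ _
  · rintro ⟨⟨a, b⟩⟩ ⟨⟨c, e⟩⟩ ⟨⟨u, v⟩⟩
    show d (a + u + (e + v)) (c + u + (b + v)) = d (a + e) (c + b)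
    calc d (a + u + (e + v)) (c + u + (b + v))
        = d (a + e + (u + v)) (c + b + (u + v)) := by congr 1 <;> abel
      _ = d (a + e) (c + b) := key _ _ _
end

section
/- Let M be a commutative monoid with translation invariant extended pseudometric d and let K(M) be its Grothendieck group. The metric ρ on K(M) defined by ρ(a−b, c−e) := d(a+e, c+b) is the unique translation invariant extended pseudometric on K(M) extending d, in the sense that its pullback along the canonical map u: M → K(M), u(a) = a−0, equals d. -/
open scoped ENNReal

/-- The canonical map `u : M → K(M)`, `a ↦ a − 0`. -/
def GrothCanon {M : Type*} [AddCommMonoid M] (a : M) : Groth M := Groth.mk a 0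

/-- `ρ(a−b,c−e) = d(a+e,c+b)` is the unique translation invariant
extended pseudometric on `K(M)` whose pullback along the canonical map `u`
equals `d`. -/
theorem groth_metric_unique {M : Type*} [AddCommMonoid M]
    (d : M → M → ℝ≥0∞)
    (hrefl : ∀ x, d x x = 0)
    (hsymm : ∀ x y, d x y = d y x)
    (htri : ∀ x y z, d x y ≤ d x z + d z y)
    (htrans : ∀ m n p : M, d (m + p) (n + p) = d m n) :
    (∃ ρ : Groth M → Groth M → ℝ≥0∞,
      (∀ a b c e : M, ρ (Groth.mk a b) (Groth.mk c e) = d (a + e) (c + b)) ∧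
      (∀ x, ρ x x = 0) ∧
      (∀ x y, ρ x y = ρ y x) ∧
      (∀ x y z, ρ x y ≤ ρ x z + ρ z y) ∧
      (∀ x y z, ρ (x.add z) (y.add z) = ρ x y) ∧
      (∀ a b : M, ρ (GrothCanon a) (GrothCanon b) = d a b)) ∧
    (∀ η : Groth M → Groth M → ℝ≥0∞,
      (∀ x, η x x = 0) →
      (∀ x y, η x y = η y x) →
      (∀ x y z, η x y ≤ η x z + η z y) →
      (∀ x y z, η (x.add z) (y.add z) = η x y) →
      (∀ a b : M, η (GrothCanon a) (GrothCanon b) = d a b) →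
      ∀ a b c e : M, η (Groth.mk a b) (Groth.mk c e) = d (a + e) (c + b)) := by

  classical
  -- the candidate metric on pairs
  have wd1 : ∀ (p q q' : M × M), GRel M q q' →
      d (p.1 + q.2) (q.1 + p.2) = d (p.1 + q'.2) (q'.1 + p.2) := by
    rintro p q q' ⟨k, hk⟩
    have h1 : p.1 + q.2 + (q'.1 + k) = p.1 + q'.2 + (q.1 + k) := by
      calc p.1 + q.2 + (q'.1 + k) = p.1 + (q.2 + q'.1 + k) := by abel
        _ = p.1 + (q.1 + q'.2 + k) := by rw [← hk]
        _ = p.1 + q'.2 + (q.1 + k) := by abel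
    have h2 : q.1 + p.2 + (q'.1 + k) = q'.1 + p.2 + (q.1 + k) := by abel
    rw [← htrans (p.1 + q.2) (q.1 + p.2) (q'.1 + k), h1, h2, htrans]
  have wd2 : ∀ (p p' q : M × M), GRel M p p' →
      d (p.1 + q.2) (q.1 + p.2) = d (p'.1 + q.2) (q.1 + p'.2) := by
    rintro p p' q ⟨k, hk⟩
    have h1 : p.1 + q.2 + (p'.2 + k) = p'.1 + q.2 + (p.2 + k) := by
      calc p.1 + q.2 + (p'.2 + k) = q.2 + (p.1 + p'.2 + k) := by abel
        _ = q.2 + (p.2 + p'.1 + k) := by rw [hk]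
        _ = p'.1 + q.2 + (p.2 + k) := by abel
    have h2 : q.1 + p.2 + (p'.2 + k) = q.1 + p'.2 + (p.2 + k) := by abel
    rw [← htrans (p.1 + q.2) (q.1 + p.2) (p'.2 + k), h1, h2, htrans]
  set ρ : Groth M → Groth M → ℝ≥0∞ :=
    Quot.lift₂ (fun p q => d (p.1 + q.2) (q.1 + p.2)) wd1 wd2 with hρ
  have hmk : ∀ a b c e : M, ρ (Groth.mk a b) (Groth.mk c e) = d (a + e) (c + b) := by
    intro a b c e; rfl
  have haddmk : ∀ a b c e : M, (Groth.mk a b).add (Groth.mk c e) = Groth.mk (a + c) (b + e) := by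
    intro a b c e; rfl
  constructor
  · refine ⟨ρ, hmk, ?_, ?_, ?_, ?_, ?_⟩
    · intro x
      induction x using Quot.ind with
      | _ p =>
        show d (p.1 + p.2) (p.1 + p.2) = 0
        exact hrefl _
    · intro x y
      induction x using Quot.ind with
      | _ p =>
        induction y using Quot.ind with
        | _ q =>
          show d (p.1 + q.2) (q.1 + p.2) = d (q.1 + p.2) (p.1 + q.2)
          exact hsymm _ _
    · intro x y z
      induction x using Quot.ind with
      | _ p =>
      induction y using Quot.ind with
      | _ q =>
      induction z using Quot.ind with
      | _ r =>
      show d (p.1 + q.2) (q.1 + p.2) ≤ d (p.1 + r.2) (r.1 + p.2) + d (r.1 + q.2) (q.1 + r.2)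
      have h1 : d (p.1 + q.2) (q.1 + p.2)
          = d (p.1 + q.2 + (r.1 + r.2)) (q.1 + p.2 + (r.1 + r.2)) := (htrans _ _ _).symm
      have h2 : d (p.1 + r.2) (r.1 + p.2)
          = d (p.1 + q.2 + (r.1 + r.2)) (p.2 + q.2 + 2 • r.1) := by
        rw [← htrans (p.1 + r.2) (r.1 + p.2) (q.2 + r.1)]
        congr 1 <;> abel
      have h3 : d (r.1 + q.2) (q.1 + r.2)
          = d (p.2 + q.2 + 2 • r.1) (q.1 + p.2 + (r.1 + r.2)) := by
        rw [← htrans (r.1 + q.2) (q.1 + r.2) (p.2 + r.1)]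
        congr 1 <;> abel
      rw [h1, h2, h3]
      exact htri _ _ _
    · intro x y z
      induction x using Quot.ind with
      | _ p =>
      induction y using Quot.ind with
      | _ q =>
      induction z using Quot.ind with
      | _ r =>
      show d (p.1 + r.1 + (q.2 + r.2)) (q.1 + r.1 + (p.2 + r.2)) = d (p.1 + q.2) (q.1 + p.2)
      rw [← htrans (p.1 + q.2) (q.1 + p.2) (r.1 + r.2)]
      congr 1 <;> abel
    · intro a b
      show d (a + 0) (b + 0) = d a b
      rw [add_zero, add_zero]
  · intro η hre hsy htr hti hc a b c e
    have e1 : (Groth.mk a b).add (Groth.mk (b + e) 0) = GrothCanon (a + e) := by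
      rw [haddmk]
      apply Quot.sound
      exact ⟨0, by simp only [add_zero]; abel⟩
    have e2 : (Groth.mk c e).add (Groth.mk (b + e) 0) = GrothCanon (c + b) := by
      rw [haddmk]
      apply Quot.sound
      exact ⟨0, by simp only [add_zero]; abel⟩
    calc η (Groth.mk a b) (Groth.mk c e)
        = η ((Groth.mk a b).add (Groth.mk (b + e) 0))
            ((Groth.mk c e).add (Groth.mk (b + e) 0)) := (hti _ _ _).symm
      _ = η (GrothCanon (a + e)) (GrothCanon (c + b)) := by rw [e1, e2]
      _ = d (a + e) (c + b) := hc _ _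
end

section
/- Let M be a commutative monoid equipped with an extended pseudometric d and let u: M → K(M) be the canonical map to the Grothendieck group. Then M is weakly cancellative if and only if u is weakly injective, i.e., u(a) = u(b) implies d(a,b) = 0. -/
open scoped ENNReal

private lemma GRel_mp {M : Type*} [AddCommMonoid M] (a : M) {p q : M × M}
    (h : GRel M p q) : (∃ k, a + p.2 + k = p.1 + k) → (∃ k, a + q.2 + k = q.1 + k) := by
  obtain ⟨m, hm⟩ := h
  rintro ⟨k, hk⟩
  refine ⟨p.2 + k + m, ?_⟩
  have h1 : a + q.2 + (p.2 + k + m) = (a + p.2 + k) + (q.2 + m) := by abel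
  rw [h1, hk]
  have h2 : p.1 + k + (q.2 + m) = (p.1 + q.2 + m) + k := by abel
  rw [h2, hm]
  abel

private lemma GRel_symm {M : Type*} [AddCommMonoid M] {p q : M × M}
    (h : GRel M p q) : GRel M q p := by
  obtain ⟨m, hm⟩ := h
  refine ⟨m, ?_⟩
  have h1 : q.1 + p.2 + m = p.2 + q.1 + m := by abel
  rw [h1, ← hm]
  abel

private lemma GrothCanon_rel {M : Type*} [AddCommMonoid M] {a b : M}
    (h : GrothCanon a = GrothCanon b) : ∃ k, a + k = b + k := by
  have key : Quot.lift (fun q : M × M => ∃ k, a + q.2 + k = q.1 + k)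
        (fun p q hpq => propext ⟨GRel_mp a hpq, GRel_mp a (GRel_symm hpq)⟩)
        (GrothCanon a) := ⟨0, by simp⟩
  rw [h] at key
  obtain ⟨k, hk⟩ := key
  exact ⟨k, by simpa using hk⟩

/-- `M` is weakly cancellative iff the canonical map
`u : M → K(M)` is weakly injective. -/
theorem weakly_cancellative_iff_weakly_injective {M : Type*} [AddCommMonoid M]
    (d : M → M → ℝ≥0∞)
    (hrefl : ∀ x, d x x = 0)
    (hsymm : ∀ x y, d x y = d y x)
    (htri : ∀ x y z, d x y ≤ d x z + d z y) :
    (∀ a b c : M, a + c = b + c → d a b = 0) ↔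
    (∀ a b : M, GrothCanon a = GrothCanon b → d a b = 0) := by
  constructor
  · intro hc a b h
    obtain ⟨k, hk⟩ := GrothCanon_rel h
    exact hc a b k hk
  · intro hi a b c h
    apply hi
    exact Quot.sound ⟨c, by simpa [add_comm] using h⟩
end

section
/- Let M be a commutative monoid with translation invariant extended pseudometric d, let K(M) be its Grothendieck group equipped with the metric ρ(a−b,c−e) = d(a+e,c+b), let H be an abelian group with translation invariant extended pseudometric d_H, and let φ: M → H be a Lipschitz monoid homomorphism. Then the unique group homomorphism φ̃: K(M) → H with φ̃∘u = φ is Lipschitz with Lipschitz norm equal to that of φ. -/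
open scoped ENNReal

/-- Given a Lipschitz monoid homomorphism `φ : M → H` into an
abelian group with translation invariant extended pseudometric, the unique
induced group homomorphism `φ̃ : K(M) → H` (with `φ̃ ∘ u = φ`) is Lipschitz with
the same Lipschitz norm as `φ`, where `K(M)` carries the metric
`ρ(a−b,c−e) = d(a+e,c+b)`. -/
theorem groth_lift_lipschitz_norm {M H : Type*} [AddCommMonoid M] [AddCommGroup H]
    (d : M → M → ℝ≥0∞)
    (hrefl : ∀ x, d x x = 0)
    (hsymm : ∀ x y, d x y = d y x)
    (htri : ∀ x y z, d x y ≤ d x z + d z y)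
    (htrans : ∀ m n p : M, d (m + p) (n + p) = d m n)
    (dH : H → H → ℝ≥0∞)
    (hHrefl : ∀ x, dH x x = 0)
    (hHsymm : ∀ x y, dH x y = dH y x)
    (hHtri : ∀ x y z, dH x y ≤ dH x z + dH z y)
    (hHtrans : ∀ m n p : H, dH (m + p) (n + p) = dH m n)
    (ρ : Groth M → Groth M → ℝ≥0∞)
    (hρ : ∀ a b c e : M, ρ (Groth.mk a b) (Groth.mk c e) = d (a + e) (c + b))
    (φ : M →+ H)
    (hφlip : ∃ C : ℝ≥0∞, ∀ a b : M, dH (φ a) (φ b) ≤ C * d a b)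
    (φt : Groth M → H)
    (hφtadd : ∀ x y : Groth M, φt (x.add y) = φt x + φt y)
    (hφtu : ∀ a : M, φt (GrothCanon a) = φ a) :
    (∀ C : ℝ≥0∞, (∀ a b : M, dH (φ a) (φ b) ≤ C * d a b) →
      ∀ x y : Groth M, dH (φt x) (φt y) ≤ C * ρ x y) ∧
    sInf {C : ℝ≥0∞ | ∀ x y : Groth M, dH (φt x) (φt y) ≤ C * ρ x y} =
      sInf {C : ℝ≥0∞ | ∀ a b : M, dH (φ a) (φ b) ≤ C * d a b} := by

  have key : ∀ a b : M, φt (Groth.mk a b) = φ a - φ b := by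
    intro a b
    have h1 : (Groth.mk a b).add (GrothCanon b) = GrothCanon a := by
      show Quot.mk _ (a + b, b + 0) = Quot.mk _ (a, 0)
      exact Quot.sound ⟨0, by abel⟩
    have h2 := hφtadd (Groth.mk a b) (GrothCanon b)
    rw [h1, hφtu, hφtu] at h2
    rw [eq_sub_iff_add_eq]; exact h2.symm
  have htr : ∀ x y z w : H, dH (x - y) (z - w) = dH (x + w) (z + y) := by
    intro x y z w
    have := hHtrans (x - y) (z - w) (y + w)
    have e1 : x - y + (y + w) = x + w := by abel
    have e2 : z - w + (y + w) = z + y := by abel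
    rw [e1, e2] at this
    exact this.symm
  have part1 : ∀ C : ℝ≥0∞, (∀ a b : M, dH (φ a) (φ b) ≤ C * d a b) →
      ∀ x y : Groth M, dH (φt x) (φt y) ≤ C * ρ x y := by
    intro C hC x y
    induction x using Quot.ind with
    | _ p =>
    induction y using Quot.ind with
    | _ q =>
    have hx : (Quot.mk (GRel M) p) = Groth.mk p.1 p.2 := rfl
    have hy : (Quot.mk (GRel M) q) = Groth.mk q.1 q.2 := rfl
    rw [hx, hy, key, key, hρ, htr, ← map_add, ← map_add]
    exact hC _ _
  refine ⟨part1, le_antisymm ?_ ?_⟩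
  · apply sInf_le_sInf
    intro C hC
    exact part1 C hC
  · apply sInf_le_sInf
    intro C hC a b
    have := hC (GrothCanon a) (GrothCanon b)
    rw [hφtu, hφtu] at this
    have hρ' : ρ (GrothCanon a) (GrothCanon b) = d a b := by
      show ρ (Groth.mk a 0) (Groth.mk b 0) = d a b
      rw [hρ, add_zero, add_zero]
    rwa [hρ'] at this
end

section
/- Let M be a cancellative commutative monoid and N a submonoid of M. Then the Grothendieck group of the quotient monoid M/N is isomorphic to K(M)/K(N), the quotient of the Grothendieck group of M by the (naturally embedded) Grothendieck group of N. -/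
def Groth.neg {M : Type*} [AddCommMonoid M] : Groth M → Groth M :=
  Quot.map Prod.swap (fun _ _ ⟨k, hk⟩ => ⟨k, hk.symm⟩)

instance {M : Type*} [AddCommMonoid M] : Add (Groth M) := ⟨Groth.add⟩
instance {M : Type*} [AddCommMonoid M] : Zero (Groth M) := ⟨Groth.mk 0 0⟩
instance {M : Type*} [AddCommMonoid M] : Neg (Groth M) := ⟨Groth.neg⟩

instance Groth.instAddCommGroup {M : Type*} [AddCommMonoid M] : AddCommGroup (Groth M) where
  add := (· + ·)
  zero := 0
  neg := Neg.neg
  nsmul := nsmulRec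
  zsmul := zsmulRec
  add_assoc := by rintro ⟨a⟩ ⟨b⟩ ⟨c⟩; apply Quot.sound; refine ⟨0, ?_⟩; first | abel1 | (dsimp only [GRel]; abel1) | (simp only [add_zero, zero_add]; abel1) | ac_rfl | simp [add_assoc, add_comm, add_left_comm]
  zero_add := by rintro ⟨a⟩; apply Quot.sound; refine ⟨0, ?_⟩; first | abel1 | (dsimp only [GRel]; abel1) | (simp only [add_zero, zero_add]; abel1) | ac_rfl | simp [add_assoc, add_comm, add_left_comm]
  add_zero := by rintro ⟨a⟩; apply Quot.sound; refine ⟨0, ?_⟩; first | abel1 | (dsimp only [GRel]; abel1) | (simp only [add_zero, zero_add]; abel1) | ac_rfl | simp [add_assoc, add_comm, add_left_comm]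
  add_comm := by rintro ⟨a⟩ ⟨b⟩; exact Quot.sound ⟨0, by abel⟩
  neg_add_cancel := by rintro ⟨a⟩; exact Quot.sound ⟨0, by simp [add_comm]⟩

/-- The image of `K(N)` inside `K(M)`, as a subgroup. -/
def GrothSub {M : Type*} [AddCommMonoid M] (N : AddSubmonoid M) : AddSubgroup (Groth M) where
  carrier := {x | ∃ a ∈ N, ∃ b ∈ N, x = Groth.mk a b}
  zero_mem' := ⟨0, N.zero_mem, 0, N.zero_mem, rfl⟩
  add_mem' := by
    rintro x y ⟨a, ha, b, hb, rfl⟩ ⟨c, hc, e, he, rfl⟩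
    exact ⟨a + c, N.add_mem ha hc, b + e, N.add_mem hb he, rfl⟩
  neg_mem' := by
    rintro x ⟨a, ha, b, hb, rfl⟩
    exact ⟨b, hb, a, ha, rfl⟩

/-- The congruence on `M` induced by a submonoid `N`: `a ∼ b` iff `a + x = b + y`
for some `x, y ∈ N`.  The quotient monoid `M/N` is its `AddCon.Quotient`. -/
def quotCon {M : Type*} [AddCommMonoid M] (N : AddSubmonoid M) : AddCon M where
  r a b := ∃ x ∈ N, ∃ y ∈ N, a + x = b + y
  iseqv := by
    refine ⟨fun a => ⟨0, N.zero_mem, 0, N.zero_mem, rfl⟩, ?_, ?_⟩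
    · rintro a b ⟨x, hx, y, hy, h⟩; exact ⟨y, hy, x, hx, h.symm⟩
    · rintro a b c ⟨x, hx, y, hy, h1⟩ ⟨x', hx', y', hy', h2⟩
      refine ⟨x + x', N.add_mem hx hx', y' + y, N.add_mem hy' hy, ?_⟩
      calc a + (x + x') = a + x + x' := by abel
        _ = b + y + x' := by rw [h1]
        _ = b + x' + y := by abel
        _ = c + y' + y := by rw [h2]
        _ = c + (y' + y) := by abel
  add' := by
    rintro a b c e ⟨x, hx, y, hy, h1⟩ ⟨x', hx', y', hy', h2⟩
    refine ⟨x + x', N.add_mem hx hx', y + y', N.add_mem hy hy', ?_⟩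
    calc a + c + (x + x') = (a + x) + (c + x') := by abel
      _ = (b + y) + (e + y') := by rw [h1, h2]
      _ = b + e + (y + y') := by abel

/-! Extending `M → M/N` to Grothendieck groups gives a surjection `K(M) → K(M/N)`. Its kernel is
`K(N)`: if `[a] - [b]` dies in `K(M/N)` then `a + c + x = b + c + y` for some `c` and `x, y ∈ N`,
and cancelling `c` shows `[a] - [b] = [y] - [x]`. -/

namespace Groth

variable {M M' : Type*} [AddCommMonoid M] [AddCommMonoid M']

theorem gRel_equivalence : Equivalence (GRel M) where
  refl p := ⟨0, by rw [add_comm p.1 p.2]⟩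
  symm := fun {p q} ⟨k, hk⟩ => ⟨k, by rw [add_comm q.1 p.2, add_comm q.2 p.1]; exact hk.symm⟩
  trans := fun {p q r} ⟨k, hk⟩ ⟨l, hl⟩ => ⟨q.2 + q.1 + k + l, by
    calc p.1 + r.2 + (q.2 + q.1 + k + l) = (p.1 + q.2 + k) + (q.1 + r.2 + l) := by abel
      _ = (p.2 + q.1 + k) + (q.2 + r.1 + l) := by rw [hk, hl]
      _ = p.2 + r.1 + (q.2 + q.1 + k + l) := by abel⟩

theorem exists_mk_eq (x : Groth M) : ∃ a b, mk a b = x := by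
  obtain ⟨⟨a, b⟩, rfl⟩ := Quot.exists_rep x
  exact ⟨a, b, rfl⟩

theorem mk_eq_mk_iff {a b c d : M} : mk a b = mk c d ↔ ∃ k, a + d + k = b + c + k :=
  ⟨fun h => gRel_equivalence.eqvGen_iff.mp (Quot.eqvGen_exact h), fun h => Quot.sound h⟩

theorem mk_eq_zero_iff {a b : M} : mk a b = 0 ↔ ∃ k, a + k = b + k := by
  simp only [show (0 : Groth M) = mk 0 0 from rfl, mk_eq_mk_iff, add_zero]

theorem mk_eq_mk_of_add_eq {a b c d : M} (h : a + d = b + c) : mk a b = mk c d :=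
  mk_eq_mk_iff.mpr ⟨0, by rw [h]⟩

def map (f : M →+ M') : Groth M →+ Groth M' where
  toFun := Quot.map (Prod.map f f) fun _ _ ⟨k, hk⟩ => ⟨f k, by simpa using congrArg f hk⟩
  map_zero' := congrArg₂ mk f.map_zero f.map_zero
  map_add' := by
    rintro ⟨a⟩ ⟨b⟩
    exact congrArg₂ mk (f.map_add a.1 b.1) (f.map_add a.2 b.2)

@[simp]
theorem map_mk (f : M →+ M') (a b : M) : map f (mk a b) = mk (f a) (f b) := rfl

theorem map_surjective {f : M →+ M'} (hf : Function.Surjective f) :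
    Function.Surjective (map f) := by
  intro x
  obtain ⟨a', b', rfl⟩ := exists_mk_eq x
  obtain ⟨a, rfl⟩ := hf a'
  obtain ⟨b, rfl⟩ := hf b'
  exact ⟨mk a b, rfl⟩

end Groth

theorem quotCon_mk'_eq_zero_of_mem {M : Type*} [AddCommMonoid M] {N : AddSubmonoid M} {a : M}
    (ha : a ∈ N) : (quotCon N).mk' a = 0 :=
  (quotCon N).eq.mpr ⟨0, N.zero_mem, a, ha, by rw [add_zero, zero_add]⟩

theorem ker_grothMap_quotCon_mk' {M : Type*} [AddCancelCommMonoid M] (N : AddSubmonoid M) :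
    (Groth.map (quotCon N).mk').ker = GrothSub N := by
  ext z
  constructor
  · obtain ⟨a, b, rfl⟩ := Groth.exists_mk_eq z
    intro h
    obtain ⟨k, hk⟩ := Groth.mk_eq_zero_iff.mp h
    obtain ⟨c, rfl⟩ := (quotCon N).mk'_surjective k
    have hk' : (quotCon N).mk' (a + c) = (quotCon N).mk' (b + c) := by
      simpa only [map_add] using hk
    obtain ⟨x, hx, y, hy, hc⟩ := (quotCon N).eq.mp hk'
    have hxy : a + x = b + y :=
      add_right_cancel (b := c) (by rw [add_right_comm, hc, add_right_comm])
    exact ⟨y, hy, x, hx, Groth.mk_eq_mk_of_add_eq hxy⟩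
  · rintro ⟨y, hy, x, hx, rfl⟩
    rw [AddMonoidHom.mem_ker, Groth.map_mk, quotCon_mk'_eq_zero_of_mem hy,
      quotCon_mk'_eq_zero_of_mem hx]
    rfl

/-- For a cancellative commutative monoid `M` and a submonoid `N`,
the Grothendieck group of the quotient monoid `M/N` is isomorphic to the
quotient `K(M)/K(N)` of Grothendieck groups. -/
theorem groth_of_quotient {M : Type*} [AddCancelCommMonoid M] (N : AddSubmonoid M) :
    Nonempty (Groth (quotCon N).Quotient ≃+ Groth M ⧸ GrothSub N) :=
  ⟨((QuotientAddGroup.quotientAddEquivOfEq (ker_grothMap_quotCon_mk' N).symm).trans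
    (QuotientAddGroup.quotientKerEquivOfSurjective _
      (Groth.map_surjective (quotCon N).mk'_surjective))).symm⟩
end

section
/- Let (X,d,A) be a metric pair and p ∈ [1,∞]. Then the p-Wasserstein distance W_p[d] on the monoid D(X,A) of persistence diagrams is p-subadditive: for all diagrams α,β,γ,δ, W_p(α+β, γ+δ) ≤ ‖(W_p(α,γ), W_p(β,δ))‖_p. -/
open scoped ENNReal
open Finsupp

/-- The `ℓᵖ` norm of a finite multiset of values in `[0,∞]`, for `p ∈ [1,∞]`. -/
noncomputable def lpNorm (p : ℝ≥0∞) (s : Multiset ℝ≥0∞) : ℝ≥0∞ :=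
  if p = ∞ then s.sup else (s.map (fun x => x ^ p.toReal)).sum ^ (1 / p.toReal)

/-- The `ℓᵖ` norm of a pair of values in `[0,∞]`. -/
noncomputable def lpPair (p : ℝ≥0∞) (a b : ℝ≥0∞) : ℝ≥0∞ := lpNorm p {a, b}

/-- A formal sum is supported in `A`. -/
def SuppIn {X : Type*} (A : Set X) (α : X →₀ ℕ) : Prop := ↑α.support ⊆ A

/-- Equality modulo `D(A)`: `α = β (mod D(A))`. -/
def DRel {X : Type*} (A : Set X) (α β : X →₀ ℕ) : Prop :=
  ∃ a b : X →₀ ℕ, SuppIn A a ∧ SuppIn A b ∧ α + a = β + b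

/-- `σ ∈ D(X × X)` is a matching between `α` and `β` (mod `D(A)`). -/
noncomputable def IsMatching {X : Type*} (A : Set X) (σ : X × X →₀ ℕ) (α β : X →₀ ℕ) : Prop :=
  DRel A (Finsupp.mapDomain Prod.fst σ) α ∧ DRel A (Finsupp.mapDomain Prod.snd σ) β

/-- The `p`-cost of a matching `σ` with respect to `d`. -/
noncomputable def matchCost {X : Type*} (d : X → X → ℝ≥0∞) (p : ℝ≥0∞) (σ : X × X →₀ ℕ) : ℝ≥0∞ :=
  lpNorm p (σ.toMultiset.map (fun z => d z.1 z.2))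

/-- The `p`-Wasserstein distance between persistence diagrams on `(X, d, A)`,
computed on representatives in the free commutative monoid `D(X) = (X →₀ ℕ)`. -/
noncomputable def Wp {X : Type*} (d : X → X → ℝ≥0∞) (A : Set X) (p : ℝ≥0∞)
    (α β : X →₀ ℕ) : ℝ≥0∞ :=
  ⨅ σ : {σ : X × X →₀ ℕ // IsMatching A σ α β}, matchCost d p σ.1

/-! ### Auxiliary lemmas -/

/-- `x ↦ x ^ t` as an order isomorphism of `ℝ≥0∞`, for `t > 0`. -/
noncomputable def rpowOrderIso (t : ℝ) (ht : 0 < t) : ℝ≥0∞ ≃o ℝ≥0∞ where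
  toFun x := x ^ t
  invFun x := x ^ (1/t)
  left_inv x := by
    show (x ^ t) ^ (1/t) = x
    rw [← ENNReal.rpow_mul, mul_one_div, div_self ht.ne', ENNReal.rpow_one]
  right_inv x := by
    show (x ^ (1/t)) ^ t = x
    rw [← ENNReal.rpow_mul, one_div_mul_cancel ht.ne', ENNReal.rpow_one]
  map_rel_iff' := by
    intro a b
    exact ENNReal.rpow_le_rpow_iff ht

lemma iInf_rpow {ι : Sort*} (f : ι → ℝ≥0∞) {t : ℝ} (ht : 0 < t) :
    (⨅ i, f i) ^ t = ⨅ i, (f i) ^ t :=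
  (rpowOrderIso t ht).map_iInf f

lemma toReal_pos_of_one_le {p : ℝ≥0∞} (hp : 1 ≤ p) (hp' : p ≠ ∞) : 0 < p.toReal := by
  have : (1 : ℝ≥0∞).toReal ≤ p.toReal := ENNReal.toReal_mono hp' hp
  simpa using lt_of_lt_of_le one_pos this

lemma lpPair_top (a b : ℝ≥0∞) : lpPair ∞ a b = a ⊔ b := by
  simp [lpPair, lpNorm]

lemma lpPair_of_ne_top {p : ℝ≥0∞} (hp' : p ≠ ∞) (a b : ℝ≥0∞) :
    lpPair p a b = (a ^ p.toReal + b ^ p.toReal) ^ (1 / p.toReal) := by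
  simp [lpPair, lpNorm, hp']

lemma lpPair_comm (p : ℝ≥0∞) (a b : ℝ≥0∞) : lpPair p a b = lpPair p b a := by
  unfold lpPair
  rw [Multiset.pair_comm]

lemma lpNorm_add {p : ℝ≥0∞} (hp : 1 ≤ p) (s t : Multiset ℝ≥0∞) :
    lpNorm p (s + t) = lpPair p (lpNorm p s) (lpNorm p t) := by
  by_cases hp' : p = ∞
  · subst hp'
    simp [lpNorm, lpPair, Multiset.sup_add]
  · have ht : 0 < p.toReal := toReal_pos_of_one_le hp hp'
    rw [lpPair_of_ne_top hp']
    have hinv : ∀ S : ℝ≥0∞, (S ^ (1 / p.toReal)) ^ p.toReal = S := by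
      intro S
      rw [← ENNReal.rpow_mul, one_div_mul_cancel ht.ne', ENNReal.rpow_one]
    simp only [lpNorm, hp', if_false, hinv]
    rw [Multiset.map_add, Multiset.sum_add]

lemma lpPair_iInf_left {p : ℝ≥0∞} (hp : 1 ≤ p) {ι : Sort*} (f : ι → ℝ≥0∞) (b : ℝ≥0∞) :
    lpPair p (⨅ i, f i) b = ⨅ i, lpPair p (f i) b := by
  by_cases hp' : p = ∞
  · subst hp'
    simp only [lpPair_top]
    exact iInf_sup_eq _ _
  · have ht : 0 < p.toReal := toReal_pos_of_one_le hp hp'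
    simp only [lpPair_of_ne_top hp']
    rw [iInf_rpow f ht, ENNReal.iInf_add, iInf_rpow _ (by positivity : (0:ℝ) < 1 / p.toReal)]

lemma lpPair_iInf_right {p : ℝ≥0∞} (hp : 1 ≤ p) {ι : Sort*} (a : ℝ≥0∞) (g : ι → ℝ≥0∞) :
    lpPair p a (⨅ i, g i) = ⨅ i, lpPair p a (g i) := by
  rw [lpPair_comm, lpPair_iInf_left hp]
  simp only [lpPair_comm p a]

lemma SuppIn.add {X : Type*} {A : Set X} {a b : X →₀ ℕ} (ha : SuppIn A a) (hb : SuppIn A b) :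
    SuppIn A (a + b) := by
  classical
  intro x hx
  have := Finsupp.support_add (g₁ := a) (g₂ := b) hx
  rcases Finset.mem_union.1 this with h | h
  · exact ha h
  · exact hb h

lemma DRel.add {X : Type*} {A : Set X} {α β γ δ : X →₀ ℕ}
    (h₁ : DRel A α γ) (h₂ : DRel A β δ) : DRel A (α + β) (γ + δ) := by
  obtain ⟨a₁, b₁, ha₁, hb₁, he₁⟩ := h₁
  obtain ⟨a₂, b₂, ha₂, hb₂, he₂⟩ := h₂
  refine ⟨a₁ + a₂, b₁ + b₂, ha₁.add ha₂, hb₁.add hb₂, ?_⟩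
  have : (α + a₁) + (β + a₂) = (γ + b₁) + (δ + b₂) := by rw [he₁, he₂]
  calc α + β + (a₁ + a₂) = (α + a₁) + (β + a₂) := by abel
    _ = (γ + b₁) + (δ + b₂) := this
    _ = γ + δ + (b₁ + b₂) := by abel

lemma IsMatching.add {X : Type*} {A : Set X} {σ₁ σ₂ : X × X →₀ ℕ} {α β γ δ : X →₀ ℕ}
    (h₁ : IsMatching A σ₁ α γ) (h₂ : IsMatching A σ₂ β δ) :
    IsMatching A (σ₁ + σ₂) (α + β) (γ + δ) := by
  constructor
  · rw [Finsupp.mapDomain_add]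
    exact h₁.1.add h₂.1
  · rw [Finsupp.mapDomain_add]
    exact h₁.2.add h₂.2

lemma matchCost_add {X : Type*} (d : X → X → ℝ≥0∞) {p : ℝ≥0∞} (hp : 1 ≤ p)
    (σ₁ σ₂ : X × X →₀ ℕ) :
    matchCost d p (σ₁ + σ₂) = lpPair p (matchCost d p σ₁) (matchCost d p σ₂) := by
  unfold matchCost
  rw [Finsupp.toMultiset_add, Multiset.map_add, lpNorm_add hp]

/-- The `p`-Wasserstein distance on persistence diagrams of a
metric pair `(X,d,A)` is `p`-subadditive:
`W_p(α+β, γ+δ) ≤ ‖(W_p(α,γ), W_p(β,δ))‖_p`. -/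
theorem wasserstein_p_subadditive {X : Type*}
    (d : X → X → ℝ≥0∞)
    (hrefl : ∀ x, d x x = 0)
    (hsymm : ∀ x y, d x y = d y x)
    (htri : ∀ x y z, d x y ≤ d x z + d z y)
    (A : Set X) (p : ℝ≥0∞) (hp : 1 ≤ p) :
    ∀ α β γ δ : X →₀ ℕ,
      Wp d A p (α + β) (γ + δ) ≤ lpPair p (Wp d A p α γ) (Wp d A p β δ) := by
  intro α β γ δ
  unfold Wp
  rw [lpPair_iInf_left hp]
  refine le_iInf fun σ₁ => ?_
  rw [lpPair_iInf_right hp]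
  refine le_iInf fun σ₂ => ?_
  refine iInf_le_of_le ⟨σ₁.1 + σ₂.1, σ₁.2.add σ₂.2⟩ ?_
  rw [matchCost_add d hp]
end

section
/- Let (X,d,A) be a metric pair and p ∈ [1,∞]. The Wasserstein distance W_p is translation subinvariant on D(X,A): for all α, β, γ ∈ D(X,A), W_p(α+γ, β+γ) ≤ W_p(α, β). -/
open scoped ENNReal
open Finsupp

/- Given a matching `σ` of `α` with `β`, adding the diagonal copy `∑ (x, x)` of `γ` gives a
matching of `α + γ` with `β + γ`; the new pairs have cost `d x x = 0`, and zeros do not change an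
`ℓᵖ` norm once `p ≠ 0`. -/

lemma lpNorm_add_replicate_zero {p : ℝ≥0∞} (hp : p ≠ 0) (s : Multiset ℝ≥0∞) (n : ℕ) :
    lpNorm p (s + Multiset.replicate n 0) = lpNorm p s := by
  unfold lpNorm
  split_ifs with h
  · have hzero : (Multiset.replicate n (0 : ℝ≥0∞)).sup = 0 :=
      le_antisymm (Multiset.sup_le.2 fun b hb => (Multiset.eq_of_mem_replicate hb).le) bot_le
    rw [Multiset.sup_add, hzero, max_eq_left zero_le]
  · have hpos : 0 < p.toReal := ENNReal.toReal_pos hp h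
    rw [Multiset.map_add, Multiset.sum_add, Multiset.map_replicate,
      ENNReal.zero_rpow_of_pos hpos, Multiset.sum_replicate, smul_zero, add_zero]

lemma DRel.add_right {X : Type*} {A : Set X} {α β : X →₀ ℕ} (h : DRel A α β) (γ : X →₀ ℕ) :
    DRel A (α + γ) (β + γ) := by
  obtain ⟨a, b, ha, hb, hab⟩ := h
  exact ⟨a, b, ha, hb, by rw [add_right_comm, hab, add_right_comm]⟩

section Diagonal

variable {X : Type*}

noncomputable def diagonalMatching (γ : X →₀ ℕ) : X × X →₀ ℕ :=
  mapDomain (fun x => (x, x)) γ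

lemma mapDomain_fst_diagonalMatching (γ : X →₀ ℕ) :
    mapDomain Prod.fst (diagonalMatching γ) = γ := by
  rw [diagonalMatching, ← mapDomain_comp]
  exact mapDomain_id

lemma mapDomain_snd_diagonalMatching (γ : X →₀ ℕ) :
    mapDomain Prod.snd (diagonalMatching γ) = γ := by
  rw [diagonalMatching, ← mapDomain_comp]
  exact mapDomain_id

lemma IsMatching.add_diagonalMatching {A : Set X} {σ : X × X →₀ ℕ} {α β : X →₀ ℕ}
    (h : IsMatching A σ α β) (γ : X →₀ ℕ) :
    IsMatching A (σ + diagonalMatching γ) (α + γ) (β + γ) := by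
  refine ⟨?_, ?_⟩
  · rw [mapDomain_add, mapDomain_fst_diagonalMatching]
    exact h.1.add_right γ
  · rw [mapDomain_add, mapDomain_snd_diagonalMatching]
    exact h.2.add_right γ

lemma map_toMultiset_diagonalMatching {d : X → X → ℝ≥0∞} (hrefl : ∀ x, d x x = 0)
    (γ : X →₀ ℕ) :
    (diagonalMatching γ).toMultiset.map (fun z => d z.1 z.2) =
      Multiset.replicate (Multiset.card γ.toMultiset) 0 := by
  rw [diagonalMatching, ← toMultiset_map, Multiset.map_map, Multiset.eq_replicate]
  refine ⟨Multiset.card_map _ _, fun b hb => ?_⟩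
  obtain ⟨x, -, rfl⟩ := Multiset.mem_map.1 hb
  exact hrefl x

lemma matchCost_add_diagonalMatching {d : X → X → ℝ≥0∞} (hrefl : ∀ x, d x x = 0)
    {p : ℝ≥0∞} (hp : p ≠ 0) (σ : X × X →₀ ℕ) (γ : X →₀ ℕ) :
    matchCost d p (σ + diagonalMatching γ) = matchCost d p σ := by
  rw [matchCost, toMultiset_add, Multiset.map_add, map_toMultiset_diagonalMatching hrefl,
    lpNorm_add_replicate_zero hp, matchCost]

end Diagonal

theorem wasserstein_translation_subinvariant_general {X : Type*}
    (d : X → X → ℝ≥0∞)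
    (hrefl : ∀ x, d x x = 0)
    (A : Set X) (p : ℝ≥0∞) (hp : 1 ≤ p) :
    ∀ α β γ : X →₀ ℕ, Wp d A p (α + γ) (β + γ) ≤ Wp d A p α β := by
  intro α β γ
  refine le_iInf fun ⟨σ, hσ⟩ => ?_
  calc Wp d A p (α + γ) (β + γ)
      ≤ matchCost d p (σ + diagonalMatching γ) :=
        iInf_le_of_le ⟨_, hσ.add_diagonalMatching γ⟩ le_rfl
    _ = matchCost d p σ := matchCost_add_diagonalMatching hrefl (one_pos.trans_le hp).ne' σ γ

/-- The `p`-Wasserstein distance on persistence diagrams of a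
metric pair `(X,d,A)` is translation subinvariant:
`W_p(α+γ, β+γ) ≤ W_p(α, β)`. -/
theorem wasserstein_translation_subinvariant {X : Type*}
    (d : X → X → ℝ≥0∞)
    (hrefl : ∀ x, d x x = 0)
    (hsymm : ∀ x y, d x y = d y x)
    (htri : ∀ x y z, d x y ≤ d x z + d z y)
    (A : Set X) (p : ℝ≥0∞) (hp : 1 ≤ p) :
    ∀ α β γ : X →₀ ℕ, Wp d A p (α + γ) (β + γ) ≤ Wp d A p α β :=
  wasserstein_translation_subinvariant_general d hrefl A p hp
end

section
/- For any metric pair (X,d,A), the 1-Wasserstein distance W₁ on the monoid of persistence diagrams D(X,A) is translation invariant: W₁(α+γ, β+γ) = W₁(α,β) for all α,β,γ ∈ D(X,A). -/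
open scoped ENNReal
open Finsupp

section Aux

variable {X : Type*}

/-- The 1-cost of a multiset of pairs. -/
noncomputable def mcost (d : X → X → ℝ≥0∞) (σ : Multiset (X × X)) : ℝ≥0∞ :=
  (σ.map fun z => d z.1 z.2).sum

lemma lpNorm_one (s : Multiset ℝ≥0∞) : lpNorm 1 s = s.sum := by
  simp [lpNorm, ENNReal.rpow_one, Multiset.map_id']

lemma matchCost_one (d : X → X → ℝ≥0∞) (σ : X × X →₀ ℕ) :
    matchCost d 1 σ = mcost d σ.toMultiset := by
  simp [matchCost, lpNorm_one, mcost]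

lemma mcost_cons (d : X → X → ℝ≥0∞) (p : X × X) (σ : Multiset (X × X)) :
    mcost d (p ::ₘ σ) = d p.1 p.2 + mcost d σ := by
  simp [mcost]

lemma mcost_add (d : X → X → ℝ≥0∞) (σ τ : Multiset (X × X)) :
    mcost d (σ + τ) = mcost d σ + mcost d τ := by
  simp [mcost]

/-- Single point cancellation: from a matching witnessing `α + {x} ≡ β + {x}` one can
construct a matching witnessing `α ≡ β` of no greater cost. -/
lemma cancel_single (d : X → X → ℝ≥0∞)
    (hrefl : ∀ x, d x x = 0)
    (htri : ∀ x y z, d x y ≤ d x z + d z y)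
    (A : Set X) (σ : Multiset (X × X)) (α β a a' b b' : Multiset X) (x : X)
    (ha : ∀ z ∈ a, z ∈ A) (ha' : ∀ z ∈ a', z ∈ A)
    (hb : ∀ z ∈ b, z ∈ A) (hb' : ∀ z ∈ b', z ∈ A)
    (h1 : σ.map Prod.fst + a = α + {x} + a')
    (h2 : σ.map Prod.snd + b = β + {x} + b') :
    ∃ (σ' : Multiset (X × X)) (a₂ a₂' b₂ b₂' : Multiset X),
      (∀ z ∈ a₂, z ∈ A) ∧ (∀ z ∈ a₂', z ∈ A) ∧ (∀ z ∈ b₂, z ∈ A) ∧ (∀ z ∈ b₂', z ∈ A) ∧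
      σ'.map Prod.fst + a₂ = α + a₂' ∧ σ'.map Prod.snd + b₂ = β + b₂' ∧
      mcost d σ' ≤ mcost d σ := by
  classical
  have hrw : ∀ (u u' : Multiset X), u + {x} + u' = x ::ₘ (u + u') := by
    intro u u'
    rw [add_comm u {x}, Multiset.singleton_add, Multiset.cons_add]
  by_cases hxA : x ∈ A
  · refine ⟨σ, a, {x} + a', b, {x} + b', ha, ?_, hb, ?_, ?_, ?_, le_rfl⟩
    · intro z hz
      rcases Multiset.mem_add.1 hz with hz | hz
      · rwa [Multiset.mem_singleton.1 hz]
      · exact ha' z hz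
    · intro z hz
      rcases Multiset.mem_add.1 hz with hz | hz
      · rwa [Multiset.mem_singleton.1 hz]
      · exact hb' z hz
    · rw [h1, add_assoc]
    · rw [h2, add_assoc]
  · -- x ∉ A : find the pair (x, y) ∈ σ
    have hx1 : x ∈ σ.map Prod.fst := by
      have hmem : x ∈ σ.map Prod.fst + a := by
        rw [h1]; exact Multiset.mem_add.2 (Or.inl (Multiset.mem_add.2 (Or.inr (Multiset.mem_singleton_self x))))
      rcases Multiset.mem_add.1 hmem with h | h
      · exact h
      · exact absurd (ha _ h) hxA
    obtain ⟨p, hp, hpx⟩ := Multiset.mem_map.1 hx1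
    set τ := σ.erase p with hτ
    have hσ : σ = p ::ₘ τ := (Multiset.cons_erase hp).symm
    have hσf : σ.map Prod.fst = x ::ₘ τ.map Prod.fst := by
      rw [hσ, Multiset.map_cons, hpx]
    have hσs : σ.map Prod.snd = p.2 ::ₘ τ.map Prod.snd := by
      rw [hσ, Multiset.map_cons]
    have e1 : τ.map Prod.fst + a = α + a' := by
      have h1' := h1
      rw [hσf, Multiset.cons_add, hrw α a'] at h1'
      exact (Multiset.cons_inj_right x).1 h1'
    have h2' := h2
    rw [hσs, Multiset.cons_add, hrw β b'] at h2'
    -- h2' : p.2 ::ₘ (τ.map Prod.snd + b) = x ::ₘ (β + b')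
    by_cases hxy : p.2 = x
    · -- the pair is (x, x); drop it
      rw [hxy] at h2'
      have e2 : τ.map Prod.snd + b = β + b' := (Multiset.cons_inj_right x).1 h2'
      refine ⟨τ, a, a', b, b', ha, ha', hb, hb', e1, e2, ?_⟩
      rw [hσ, mcost_cons, hpx, hxy, hrefl x, zero_add]
    · -- find the pair (z, x) ∈ τ and compose
      have hx2 : x ∈ τ.map Prod.snd := by
        have hmem : x ∈ p.2 ::ₘ (τ.map Prod.snd + b) := by
          rw [h2']; exact Multiset.mem_cons_self _ _
        rcases Multiset.mem_cons.1 hmem with h | h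
        · exact absurd h.symm hxy
        · rcases Multiset.mem_add.1 h with h | h
          · exact h
          · exact absurd (hb _ h) hxA
      obtain ⟨q, hq, hqx⟩ := Multiset.mem_map.1 hx2
      set ρ := τ.erase q with hρ
      have hτq : τ = q ::ₘ ρ := (Multiset.cons_erase hq).symm
      have hτf : τ.map Prod.fst = q.1 ::ₘ ρ.map Prod.fst := by
        rw [hτq, Multiset.map_cons]
      have hτs : τ.map Prod.snd = x ::ₘ ρ.map Prod.snd := by
        rw [hτq, Multiset.map_cons, hqx]
      have e2 : p.2 ::ₘ (ρ.map Prod.snd + b) = β + b' := by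
        rw [hτs, Multiset.cons_add, Multiset.cons_swap] at h2'
        exact (Multiset.cons_inj_right x).1 h2'
      refine ⟨(q.1, p.2) ::ₘ ρ, a, a', b, b', ha, ha', hb, hb', ?_, ?_, ?_⟩
      · rw [Multiset.map_cons, ← hτf]
        exact e1
      · rw [Multiset.map_cons, Multiset.cons_add]
        exact e2
      · rw [hσ, hτq, mcost_cons, mcost_cons, mcost_cons, hpx, hqx]
        calc d q.1 p.2 + mcost d ρ ≤ (d q.1 x + d x p.2) + mcost d ρ := by
              gcongr
              exact htri q.1 p.2 x
          _ = d x p.2 + (d q.1 x + mcost d ρ) := by ring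

/-- Cancellation of a common multiset `c`. -/
lemma cancel (d : X → X → ℝ≥0∞)
    (hrefl : ∀ x, d x x = 0)
    (htri : ∀ x y z, d x y ≤ d x z + d z y)
    (A : Set X) (c : Multiset X) :
    ∀ (σ : Multiset (X × X)) (α β a a' b b' : Multiset X),
      (∀ z ∈ a, z ∈ A) → (∀ z ∈ a', z ∈ A) → (∀ z ∈ b, z ∈ A) → (∀ z ∈ b', z ∈ A) →
      σ.map Prod.fst + a = α + c + a' → σ.map Prod.snd + b = β + c + b' →
      ∃ (σ' : Multiset (X × X)) (a₂ a₂' b₂ b₂' : Multiset X),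
        (∀ z ∈ a₂, z ∈ A) ∧ (∀ z ∈ a₂', z ∈ A) ∧ (∀ z ∈ b₂, z ∈ A) ∧ (∀ z ∈ b₂', z ∈ A) ∧
        σ'.map Prod.fst + a₂ = α + a₂' ∧ σ'.map Prod.snd + b₂ = β + b₂' ∧
        mcost d σ' ≤ mcost d σ := by
  induction c using Multiset.induction_on with
  | empty =>
    intro σ α β a a' b b' ha ha' hb hb' h1 h2
    rw [add_zero] at h1 h2
    exact ⟨σ, a, a', b, b', ha, ha', hb, hb', h1, h2, le_rfl⟩
  | cons x c ih =>
    intro σ α β a a' b b' ha ha' hb hb' h1 h2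
    have hx : ∀ (u : Multiset X), u + (x ::ₘ c) = (u + c) + {x} := by
      intro u
      rw [← Multiset.singleton_add, add_comm {x} c, ← add_assoc]
    rw [hx α] at h1
    rw [hx β] at h2
    obtain ⟨σ₁, a₁, a₁', b₁, b₁', ha₁, ha₁', hb₁, hb₁', e1, e2, hc⟩ :=
      cancel_single d hrefl htri A σ (α + c) (β + c) a a' b b' x ha ha' hb hb' h1 h2
    obtain ⟨σ₂, a₂, a₂', b₂, b₂', ha₂, ha₂', hb₂, hb₂', f1, f2, hc₂⟩ :=
      ih σ₁ α β a₁ a₁' b₁ b₁' ha₁ ha₁' hb₁ hb₁' e1 e2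
    exact ⟨σ₂, a₂, a₂', b₂, b₂', ha₂, ha₂', hb₂, hb₂', f1, f2, hc₂.trans hc⟩

/-- Transport a `SuppIn` hypothesis to the multiset level. -/
lemma suppIn_toMultiset {A : Set X} {a : X →₀ ℕ} (h : SuppIn A a) :
    ∀ z ∈ a.toMultiset, z ∈ A := fun z hz => h ((Finsupp.mem_toMultiset a z).1 hz)

lemma hard_dir (d : X → X → ℝ≥0∞)
    (hrefl : ∀ x, d x x = 0)
    (htri : ∀ x y z, d x y ≤ d x z + d z y)
    (A : Set X) (α β γ : X →₀ ℕ) :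
    Wp d A 1 α β ≤ Wp d A 1 (α + γ) (β + γ) := by
  classical
  refine le_iInf fun σp => ?_
  obtain ⟨σ, ⟨a, a', haA, ha'A, h1⟩, ⟨b, b', hbA, hb'A, h2⟩⟩ := σp
  have m1 : σ.toMultiset.map Prod.fst + a.toMultiset
      = α.toMultiset + γ.toMultiset + a'.toMultiset := by
    rw [Finsupp.toMultiset_map]
    rw [← Finsupp.toMultiset_add, ← Finsupp.toMultiset_add, ← Finsupp.toMultiset_add, h1]
  have m2 : σ.toMultiset.map Prod.snd + b.toMultiset
      = β.toMultiset + γ.toMultiset + b'.toMultiset := by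
    rw [Finsupp.toMultiset_map]
    rw [← Finsupp.toMultiset_add, ← Finsupp.toMultiset_add, ← Finsupp.toMultiset_add, h2]
  obtain ⟨σ', a₂, a₂', b₂, b₂', ha₂, ha₂', hb₂, hb₂', f1, f2, hc⟩ :=
    cancel d hrefl htri A γ.toMultiset σ.toMultiset α.toMultiset β.toMultiset
      a.toMultiset a'.toMultiset b.toMultiset b'.toMultiset
      (suppIn_toMultiset haA) (suppIn_toMultiset ha'A)
      (suppIn_toMultiset hbA) (suppIn_toMultiset hb'A) m1 m2
  have hsupp : ∀ s : Multiset X, (∀ z ∈ s, z ∈ A) → SuppIn A s.toFinsupp := by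
    intro s hs z hz
    exact hs z (Multiset.mem_toFinset.1 (by simpa using hz))
  have hinj : Function.Injective (Finsupp.toMultiset (α := X)) := by
    intro f g h
    have := congrArg Multiset.toFinsupp h
    rwa [Finsupp.toMultiset_toFinsupp, Finsupp.toMultiset_toFinsupp] at this
  have g1 : Finsupp.mapDomain Prod.fst σ'.toFinsupp + a₂.toFinsupp
      = α + a₂'.toFinsupp := by
    apply hinj
    rw [Finsupp.toMultiset_add, Finsupp.toMultiset_add, ← Finsupp.toMultiset_map,
      Multiset.toFinsupp_toMultiset, Multiset.toFinsupp_toMultiset,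
      Multiset.toFinsupp_toMultiset]
    exact f1
  have g2 : Finsupp.mapDomain Prod.snd σ'.toFinsupp + b₂.toFinsupp
      = β + b₂'.toFinsupp := by
    apply hinj
    rw [Finsupp.toMultiset_add, Finsupp.toMultiset_add, ← Finsupp.toMultiset_map,
      Multiset.toFinsupp_toMultiset, Multiset.toFinsupp_toMultiset,
      Multiset.toFinsupp_toMultiset]
    exact f2
  have hmatch : IsMatching A σ'.toFinsupp α β :=
    ⟨⟨a₂.toFinsupp, a₂'.toFinsupp, hsupp _ ha₂, hsupp _ ha₂', g1⟩,
     ⟨b₂.toFinsupp, b₂'.toFinsupp, hsupp _ hb₂, hsupp _ hb₂', g2⟩⟩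
  refine iInf_le_of_le ⟨σ'.toFinsupp, hmatch⟩ ?_
  rw [matchCost_one, matchCost_one, Multiset.toFinsupp_toMultiset]
  exact hc

end Aux

/-- For any metric pair `(X,d,A)`, the `1`-Wasserstein distance
on persistence diagrams is translation invariant. -/
theorem wasserstein_one_translation_invariant {X : Type*}
    (d : X → X → ℝ≥0∞)
    (hrefl : ∀ x, d x x = 0)
    (hsymm : ∀ x y, d x y = d y x)
    (htri : ∀ x y z, d x y ≤ d x z + d z y)
    (A : Set X) :
    ∀ α β γ : X →₀ ℕ, Wp d A 1 (α + γ) (β + γ) = Wp d A 1 α β := by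
  intro α β γ
  refine le_antisymm ?_ (hard_dir d hrefl htri A α β γ)
  -- easy direction: pad a matching of (α, β) with the diagonal of γ
  refine le_iInf fun σp => ?_
  obtain ⟨σ, ⟨a, a', haA, ha'A, h1⟩, ⟨b, b', hbA, hb'A, h2⟩⟩ := σp
  set Dγ : X × X →₀ ℕ := Finsupp.mapDomain (fun x => (x, x)) γ with hDγ
  have hfst : Finsupp.mapDomain Prod.fst Dγ = γ := by
    rw [hDγ, ← Finsupp.mapDomain_comp]
    exact Finsupp.mapDomain_id
  have hsnd : Finsupp.mapDomain Prod.snd Dγ = γ := by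
    rw [hDγ, ← Finsupp.mapDomain_comp]
    exact Finsupp.mapDomain_id
  have g1 : Finsupp.mapDomain Prod.fst (σ + Dγ) + a = (α + γ) + a' := by
    rw [Finsupp.mapDomain_add, hfst, add_right_comm, h1, add_right_comm]
  have g2 : Finsupp.mapDomain Prod.snd (σ + Dγ) + b = (β + γ) + b' := by
    rw [Finsupp.mapDomain_add, hsnd, add_right_comm, h2, add_right_comm]
  have hmatch : IsMatching A (σ + Dγ) (α + γ) (β + γ) :=
    ⟨⟨a, a', haA, ha'A, g1⟩, ⟨b, b', hbA, hb'A, g2⟩⟩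
  refine iInf_le_of_le ⟨σ + Dγ, hmatch⟩ ?_
  rw [matchCost_one, matchCost_one, Finsupp.toMultiset_add, mcost_add]
  have hzero : mcost d Dγ.toMultiset = 0 := by
    rw [hDγ, ← Finsupp.toMultiset_map, mcost, Multiset.map_map]
    refine Multiset.sum_eq_zero ?_
    intro z hz
    obtain ⟨x, _, hx⟩ := Multiset.mem_map.1 hz
    rw [← hx]
    exact hrefl x
  rw [hzero, add_zero]
end
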